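/- arXiv:1607.07141 — 3 statements merged into one kernel-verified Lean document; each statement's English description precedes it below -/
import Mathlib

section
/- (L_p transference principle, inequality part of Theorem 1.1/3.1.) Let n ≥ 1 and let F : 𝒦ⁿ → [0,∞) be positively homogeneous, increasing and concave, and let p ∈ (1,∞). Then for all K, L ∈ 𝒦ⁿₒ and all α ∈ (0,1), F((1-α)·_p K +_p α·_p L)^p ≥ (1-α)F(K)^p + αF(L)^p. -/
/-!
Let `q` be the conjugate exponent of `p` and `D = (1-α) F(K)^p + α F(L)^p`. The weights
`a = (1-α) F(K)^(p-1) / D^(1/q)` and `b = α F(L)^(p-1) / D^(1/q)` satisfy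
`a F(K) + b F(L) = D^(1/p)`, and by Hölder's inequality `a h_K + b h_L ≤ h_M` on the sphere, so
`a K + b L ⊆ M` by separation. Concavity and homogeneity make `F` superadditive on nonnegative
combinations of convex bodies, hence `D^(1/p) ≤ F(a K + b L) ≤ F(M)`.
-/

open scoped Pointwise RealInnerProductSpace

/-- A convex body in `ℝⁿ`: a compact convex set with nonempty interior. -/
def IsConvexBody {n : ℕ} (K : Set (EuclideanSpace ℝ (Fin n))) : Prop :=
  IsCompact K ∧ Convex ℝ K ∧ (interior K).Nonempty

/-- A convex body containing the origin in its interior. -/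
def IsConvexBodyO {n : ℕ} (K : Set (EuclideanSpace ℝ (Fin n))) : Prop :=
  IsCompact K ∧ Convex ℝ K ∧ (0 : EuclideanSpace ℝ (Fin n)) ∈ interior K

/-- The support function of a set: `h_K(u) = sup { ⟪x, u⟫ : x ∈ K }`. -/
noncomputable def supp {n : ℕ} (K : Set (EuclideanSpace ℝ (Fin n)))
    (u : EuclideanSpace ℝ (Fin n)) : ℝ :=
  sSup ((fun x => ⟪x, u⟫) '' K)

open Finset in
theorem inner_le_weight_mul_Lp_mul_Lq_of_nonneg {ι : Type*} (s : Finset ι) {p q : ℝ}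
    (hpq : p.HolderConjugate q) {w f g : ι → ℝ} (hw : ∀ i ∈ s, 0 ≤ w i)
    (hf : ∀ i ∈ s, 0 ≤ f i) (hg : ∀ i ∈ s, 0 ≤ g i) :
    ∑ i ∈ s, w i * (f i * g i) ≤
      (∑ i ∈ s, w i * f i ^ p) ^ (1 / p) * (∑ i ∈ s, w i * g i ^ q) ^ (1 / q) := by
  have hpow (r : ℝ) (hr : r ≠ 0) {i} (hi : i ∈ s) (x : ℝ) (hx : 0 ≤ x) :
      (w i ^ (1 / r) * x) ^ r = w i * x ^ r := by
    rw [Real.mul_rpow (by have := hw i hi; positivity) hx, ← Real.rpow_mul (hw i hi),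
      one_div_mul_cancel hr, Real.rpow_one]
  have key := Real.inner_le_Lp_mul_Lq_of_nonneg s hpq
    (f := fun i => w i ^ (1 / p) * f i) (g := fun i => w i ^ (1 / q) * g i)
    (fun i hi => by have := hw i hi; have := hf i hi; positivity)
    (fun i hi => by have := hw i hi; have := hg i hi; positivity)
  rw [sum_congr rfl fun i hi => hpow p hpq.ne_zero hi _ (hf i hi),
    sum_congr rfl fun i hi => hpow q hpq.symm.ne_zero hi _ (hg i hi)] at key
  refine le_of_eq_of_le (sum_congr rfl fun i hi => ?_) key
  have hexp : 1 / p + 1 / q = 1 := by rw [one_div, one_div, hpq.inv_add_inv_eq_one]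
  rw [mul_mul_mul_comm, ← Real.rpow_add' (hw i hi) (by rw [hexp]; exact one_ne_zero), hexp,
    Real.rpow_one]

theorem weighted_inner_rpow_sub_one_le {p q w₁ w₂ c d s t : ℝ} (hpq : p.HolderConjugate q)
    (hw₁ : 0 ≤ w₁) (hw₂ : 0 ≤ w₂) (hc : 0 ≤ c) (hd : 0 ≤ d) (hs : 0 ≤ s) (ht : 0 ≤ t) :
    w₁ * c ^ (p - 1) * s + w₂ * d ^ (p - 1) * t ≤
      (w₁ * c ^ p + w₂ * d ^ p) ^ (1 / q) * (w₁ * s ^ p + w₂ * t ^ p) ^ (1 / p) := by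
  have hconj (x : ℝ) (hx : 0 ≤ x) : (x ^ (p - 1)) ^ q = x ^ p := by
    rw [← Real.rpow_mul hx, hpq.sub_one_mul_conj]
  have := inner_le_weight_mul_Lp_mul_Lq_of_nonneg Finset.univ hpq.symm
    (w := ![w₁, w₂]) (f := ![c ^ (p - 1), d ^ (p - 1)]) (g := ![s, t])
    (by simp [Fin.forall_fin_two, hw₁, hw₂])
    (by simp [Fin.forall_fin_two, Real.rpow_nonneg, hc, hd]) (by simp [Fin.forall_fin_two, hs, ht])
  simpa [Fin.sum_univ_two, hconj c hc, hconj d hd, mul_assoc] using this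

theorem exists_norming_dual_weights {p w₁ w₂ c d : ℝ} (hp : 1 < p) (hw₁ : 0 ≤ w₁) (hw₂ : 0 ≤ w₂)
    (hc : 0 ≤ c) (hd : 0 ≤ d) (hD : 0 < w₁ * c ^ p + w₂ * d ^ p) :
    ∃ a b : ℝ, 0 ≤ a ∧ 0 ≤ b ∧ 0 < a + b ∧ a * c + b * d = (w₁ * c ^ p + w₂ * d ^ p) ^ (1 / p) ∧
      ∀ s t, 0 ≤ s → 0 ≤ t → a * s + b * t ≤ (w₁ * s ^ p + w₂ * t ^ p) ^ (1 / p) := by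
  have hpq := Real.HolderConjugate.conjExponent hp
  set q := p.conjExponent
  set D := w₁ * c ^ p + w₂ * d ^ p
  have hpow (x : ℝ) (hx : 0 ≤ x) : x ^ (p - 1) * x = x ^ p := by
    rw [← Real.rpow_add_one' hx (by linarith), sub_add_cancel]
  set a := w₁ * c ^ (p - 1) / D ^ (1 / q)
  set b := w₂ * d ^ (p - 1) / D ^ (1 / q)
  have ha : 0 ≤ a := by positivity
  have hb : 0 ≤ b := by positivity
  have hnorm : a * c + b * d = D ^ (1 / p) :=
    calc _ = D / D ^ (1 / q) := by simp only [a, b, D, ← hpow _ hc, ← hpow _ hd]; ring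
      _ = D ^ (1 / p) := by
          rw [one_div, one_div, ← hpq.symm.one_sub_inv, Real.rpow_sub hD, Real.rpow_one]
  have hab : 0 < a + b := by
    have hpos : 0 < a * c + b * d := hnorm ▸ Real.rpow_pos_of_pos hD _
    by_contra! h
    simp [show a = 0 by linarith, show b = 0 by linarith] at hpos
  refine ⟨a, b, ha, hb, hab, hnorm, fun s t hs ht => ?_⟩
  calc a * s + b * t = (w₁ * c ^ (p - 1) * s + w₂ * d ^ (p - 1) * t) / D ^ (1 / q) := by ring
    _ ≤ _ := (div_le_iff₀' (by positivity)).2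
        (weighted_inner_rpow_sub_one_le hpq hw₁ hw₂ hc hd hs ht)

section ConvexBody

variable {n : ℕ}

local notation "E" => EuclideanSpace ℝ (Fin n)

theorem IsConvexBodyO.isConvexBody {K : Set E} (hK : IsConvexBodyO K) : IsConvexBody K :=
  ⟨hK.1, hK.2.1, 0, hK.2.2⟩

theorem IsConvexBody.nonempty {K : Set E} (hK : IsConvexBody K) : K.Nonempty :=
  hK.2.2.mono interior_subset

theorem IsConvexBody.smul {K : Set E} (hK : IsConvexBody K) {c : ℝ} (hc : c ≠ 0) :
    IsConvexBody (c • K) :=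
  ⟨hK.1.smul c, hK.2.1.smul c, by rw [interior_smul₀ hc]; exact hK.2.2.smul_set⟩

theorem IsConvexBody.add {K L : Set E} (hK : IsConvexBody K) (hL : IsConvexBody L) :
    IsConvexBody (K + L) := by
  refine ⟨hK.1.add hL.1, hK.2.1.add hL.2.1, ?_⟩
  have hsub : interior K + L ⊆ interior (K + L) :=
    isOpen_interior.add_right.subset_interior_iff.mpr
      (Set.add_subset_add_right interior_subset)
  exact (hK.2.2.add hL.nonempty).mono hsub

theorem IsConvexBody.smul_add_smul {K L : Set E} (hK : IsConvexBody K) (hL : IsConvexBody L)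
    {a b : ℝ} (ha : 0 ≤ a) (hb : 0 ≤ b) (hab : 0 < a + b) :
    IsConvexBody (a • K + b • L) := by
  rcases ha.eq_or_lt with rfl | ha
  · rw [Set.zero_smul_set hK.nonempty, zero_add]
    exact hL.smul (by linarith)
  rcases hb.eq_or_lt with rfl | hb
  · rw [Set.zero_smul_set hL.nonempty, add_zero]
    exact hK.smul ha.ne'
  exact (hK.smul ha.ne').add (hL.smul hb.ne')

theorem inner_le_supp_of_mem {K : Set E} (hK : IsCompact K) {x : E} (hx : x ∈ K) (u : E) :
    ⟪x, u⟫ ≤ supp K u :=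
  le_csSup (hK.image (continuous_id.inner continuous_const)).bddAbove ⟨x, hx, rfl⟩

theorem supp_nonneg {K : Set E} (hK : IsConvexBodyO K) (u : E) : 0 ≤ supp K u := by
  simpa using inner_le_supp_of_mem hK.1 (interior_subset hK.2.2) u

theorem mem_of_forall_inner_le_supp {M : Set E} (hM : Convex ℝ M) (hMc : IsClosed M)
    (hMne : M.Nonempty) {x : E} (hx : ∀ u : E, ‖u‖ = 1 → ⟪x, u⟫ ≤ supp M u) : x ∈ M := by
  by_contra hxM
  obtain ⟨f, t, hfM, hft⟩ := geometric_hahn_banach_closed_point hM hMc hxM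
  set v : E := (InnerProductSpace.toDual ℝ E).symm f
  have hv : 0 < ‖v‖ := by
    refine norm_pos_iff.mpr fun hv => ?_
    obtain ⟨y, hy⟩ := hMne
    have hf : f = 0 := by simpa [v] using hv
    simp only [hf, zero_apply] at hfM hft
    linarith [hfM y hy]
  set u : E := ‖v‖⁻¹ • v
  have hu (y : E) : ⟪y, u⟫ = ‖v‖⁻¹ * f y := by
    rw [real_inner_smul_right, real_inner_comm, InnerProductSpace.toDual_symm_apply]
  have hMu : supp M u ≤ ‖v‖⁻¹ * t :=
    csSup_le (hMne.image _) <| by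
      rintro _ ⟨y, hy, rfl⟩
      exact (hu y).trans_le (mul_le_mul_of_nonneg_left (hfM y hy).le (by positivity))
  have hxu : ‖v‖⁻¹ * t < ⟪x, u⟫ := (hu x).symm ▸ mul_lt_mul_of_pos_left hft (by positivity)
  have hunit : ‖u‖ = 1 := by simp [u, norm_smul, hv.ne']
  exact (hx u hunit).not_gt (hMu.trans_lt hxu)

theorem smul_add_smul_subset_of_supp_le {K L M : Set E} (hK : IsCompact K) (hL : IsCompact L)
    (hM : Convex ℝ M) (hMc : IsClosed M) (hMne : M.Nonempty) {a b : ℝ} (ha : 0 ≤ a) (hb : 0 ≤ b)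
    (h : ∀ u : E, ‖u‖ = 1 → a * supp K u + b * supp L u ≤ supp M u) :
    a • K + b • L ⊆ M := by
  rintro _ ⟨_, ⟨k, hk, rfl⟩, _, ⟨l, hl, rfl⟩, rfl⟩
  refine mem_of_forall_inner_le_supp hM hMc hMne fun u hu => (h u hu).trans' ?_
  rw [inner_add_left, real_inner_smul_left, real_inner_smul_left]
  gcongr
  exacts [inner_le_supp_of_mem hK hk u, inner_le_supp_of_mem hL hl u]

theorem mul_add_mul_le_of_concave_of_homogeneous (F : Set E → ℝ)
    (hFhom : ∀ c : ℝ, 0 < c → ∀ K, IsConvexBody K → F (c • K) = c * F K)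
    (hFconc : ∀ K L, IsConvexBody K → IsConvexBody L → ∀ α : ℝ, α ∈ Set.Ioo (0:ℝ) 1 →
      (1 - α) * F K + α * F L ≤ F ((1 - α) • K + α • L))
    {K L : Set E} (hK : IsConvexBody K) (hL : IsConvexBody L) {a b : ℝ} (ha : 0 ≤ a)
    (hb : 0 ≤ b) (hab : 0 < a + b) :
    a * F K + b * F L ≤ F (a • K + b • L) := by
  rcases ha.eq_or_lt with rfl | ha
  · rw [Set.zero_smul_set hK.nonempty, zero_add, zero_mul, zero_add,
      hFhom b (by simpa using hab) L hL]
  rcases hb.eq_or_lt with rfl | hb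
  · rw [Set.zero_smul_set hL.nonempty, add_zero, zero_mul, add_zero, hFhom a ha K hK]
  set β := b / (a + b) with hβ_def
  have h1β : 1 - β = a / (a + b) := by rw [hβ_def]; field_simp; ring
  have hβ : β ∈ Set.Ioo (0 : ℝ) 1 := ⟨by positivity, (div_lt_one hab).2 (by linarith)⟩
  have hsplit : a • K + b • L = (a + b) • ((1 - β) • K + β • L) := by
    rw [smul_add, smul_smul, smul_smul, h1β, mul_div_cancel₀ _ hab.ne', mul_div_cancel₀ _ hab.ne']
  have hbody : IsConvexBody ((1 - β) • K + β • L) :=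
    (hK.smul (by linarith [hβ.2])).add (hL.smul hβ.1.ne')
  calc a * F K + b * F L = (a + b) * ((1 - β) * F K + β * F L) := by
        rw [h1β, hβ_def]; field_simp
    _ ≤ (a + b) * F ((1 - β) • K + β • L) := by gcongr; exact hFconc K L hK hL β hβ
    _ = F (a • K + b • L) := by rw [hsplit, hFhom _ hab _ hbody]

end ConvexBody

theorem lp_transference_inequality_general {n : ℕ}
    (F : Set (EuclideanSpace ℝ (Fin n)) → ℝ)
    (hF0 : ∀ K, IsConvexBody K → 0 ≤ F K)
    (hFhom : ∀ c : ℝ, 0 < c → ∀ K, IsConvexBody K → F (c • K) = c * F K)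
    (hFmono : ∀ K L, IsConvexBody K → IsConvexBody L → K ⊆ L → F K ≤ F L)
    (hFconc : ∀ K L, IsConvexBody K → IsConvexBody L → ∀ α : ℝ, α ∈ Set.Ioo (0:ℝ) 1 →
      (1 - α) * F K + α * F L ≤ F ((1 - α) • K + α • L))
    (p : ℝ) (hp : 1 < p)
    (K L M : Set (EuclideanSpace ℝ (Fin n)))
    (hK : IsConvexBodyO K) (hL : IsConvexBodyO L) (hM : IsConvexBodyO M)
    (α : ℝ) (hα : α ∈ Set.Ioo (0:ℝ) 1)
    (hMsupp : ∀ u : EuclideanSpace ℝ (Fin n), ‖u‖ = 1 →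
      supp M u ^ p = (1 - α) * supp K u ^ p + α * supp L u ^ p) :
    (1 - α) * F K ^ p + α * F L ^ p ≤ F M ^ p := by
  obtain ⟨hα₀, hα₁⟩ := hα
  have hFK := hF0 K hK.isConvexBody
  have hFL := hF0 L hL.isConvexBody
  have hFM := hF0 M hM.isConvexBody
  rcases (show 0 ≤ (1 - α) * F K ^ p + α * F L ^ p by positivity).eq_or_lt with hD | hD
  · rw [← hD]; positivity
  obtain ⟨a, b, ha, hb, hab, habF, hle⟩ :=
    exists_norming_dual_weights hp (by linarith) hα₀.le hFK hFL hD
  have hsupp (u : EuclideanSpace ℝ (Fin n)) (hu : ‖u‖ = 1) :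
      a * supp K u + b * supp L u ≤ supp M u := by
    have := hle _ _ (supp_nonneg hK u) (supp_nonneg hL u)
    rwa [← hMsupp u hu, one_div, Real.rpow_rpow_inv (supp_nonneg hM u) (by linarith)] at this
  have hsub := smul_add_smul_subset_of_supp_le hK.1 hL.1 hM.2.1 hM.1.isClosed
    hM.isConvexBody.nonempty ha hb hsupp
  have hDM := habF ▸
    (mul_add_mul_le_of_concave_of_homogeneous F hFhom hFconc hK.isConvexBody hL.isConvexBody
      ha hb hab).trans
    (hFmono _ _ (hK.isConvexBody.smul_add_smul hL.isConvexBody ha hb hab) hM.isConvexBody hsub)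
  rwa [one_div, Real.rpow_inv_le_iff_of_pos hD.le hFM (by linarith)] at hDM

/-- `L_p` transference principle, inequality part of Theorem 1.1/3.1.
If `F` is nonnegative, positively homogeneous, increasing and concave on convex bodies,
`1 < p < ∞`, `K, L ∈ 𝒦ⁿₒ`, `α ∈ (0,1)`, and `M` is the convex body
`(1-α)·_p K +_p α·_p L`, i.e. the convex body with origin in its interior whose support
function satisfies `h_M^p = (1-α) h_K^p + α h_L^p` on the unit sphere, then
`F(M)^p ≥ (1-α) F(K)^p + α F(L)^p`. -/
theorem lp_transference_inequality {n : ℕ} (hn : 1 ≤ n)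
    (F : Set (EuclideanSpace ℝ (Fin n)) → ℝ)
    (hF0 : ∀ K, IsConvexBody K → 0 ≤ F K)
    (hFhom : ∀ c : ℝ, 0 < c → ∀ K, IsConvexBody K → F (c • K) = c * F K)
    (hFmono : ∀ K L, IsConvexBody K → IsConvexBody L → K ⊆ L → F K ≤ F L)
    (hFconc : ∀ K L, IsConvexBody K → IsConvexBody L → ∀ α : ℝ, α ∈ Set.Ioo (0:ℝ) 1 →
      (1 - α) * F K + α * F L ≤ F ((1 - α) • K + α • L))
    (p : ℝ) (hp : 1 < p)
    (K L M : Set (EuclideanSpace ℝ (Fin n)))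
    (hK : IsConvexBodyO K) (hL : IsConvexBodyO L) (hM : IsConvexBodyO M)
    (α : ℝ) (hα : α ∈ Set.Ioo (0:ℝ) 1)
    (hMsupp : ∀ u : EuclideanSpace ℝ (Fin n), ‖u‖ = 1 →
      supp M u ^ p = (1 - α) * supp K u ^ p + α * supp L u ^ p) :
    (1 - α) * F K ^ p + α * F L ^ p ≤ F M ^ p :=
  lp_transference_inequality_general F hF0 hFhom hFmono hFconc p hp K L M hK hL hM α hα hMsupp
end

section
/- (Equality part of Theorem 1.1/3.1.) Let n ≥ 1 and let F : 𝒦ⁿ → [0,∞) be positively homogeneous, increasing and concave, and assume in addition that F is strictly increasing on 𝒦ⁿₒ. Let p ∈ (1,∞), K, L ∈ 𝒦ⁿₒ and α ∈ (0,1). Then F((1-α)·_p K +_p α·_p L)^p = (1-α)F(K)^p + αF(L)^p holds if and only if K and L are dilates. -/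
open scoped Pointwise RealInnerProductSpace

/-!
Rescale `K`, `L`, `M` to `F`-value `1`. Because `F(M)^p = (1-α)F(K)^p + αF(L)^p`, the rescaled
`M` is the `L_p` combination of the rescaled `K`, `L` with weights `1 - w`, `w` summing to `1`.
For the Minkowski combination `N = (1 - w) K + w L`, convexity of `t ↦ t ^ p` gives `h_N ≤ h_M`,
i.e. `N ⊆ M`, while concavity of `F` gives `F N ≥ 1 = F M`. Strict monotonicity forces `N = M`,
and then strict convexity of `t ↦ t ^ p` forces `h_K = h_L`.
-/

open Set

variable {n : ℕ} {K L M : Set (EuclideanSpace ℝ (Fin n))}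

namespace IsConvexBodyO

theorem isConvexBody_s1 (hK : IsConvexBodyO K) : IsConvexBody K :=
  ⟨hK.1, hK.2.1, 0, hK.2.2⟩

theorem zero_mem (hK : IsConvexBodyO K) : (0 : EuclideanSpace ℝ (Fin n)) ∈ K :=
  interior_subset hK.2.2

theorem nonempty (hK : IsConvexBodyO K) : K.Nonempty :=
  ⟨0, hK.zero_mem⟩

theorem smul (hK : IsConvexBodyO K) {c : ℝ} (hc : 0 < c) : IsConvexBodyO (c • K) :=
  ⟨hK.1.smul c, hK.2.1.smul c, by
    rw [interior_smul₀ hc.ne']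
    exact ⟨0, hK.2.2, smul_zero c⟩⟩

theorem add (hK : IsConvexBodyO K) (hL : IsConvexBodyO L) : IsConvexBodyO (K + L) :=
  ⟨hK.1.add hL.1, hK.2.1.add hL.2.1,
    interior_maximal (add_subset_add_right interior_subset) isOpen_interior.add_right
      ⟨0, hK.2.2, 0, hL.zero_mem, add_zero 0⟩⟩

end IsConvexBodyO

theorem bddAbove_inner_image (hK : IsCompact K) (u : EuclideanSpace ℝ (Fin n)) :
    BddAbove ((fun x => ⟪x, u⟫) '' K) :=
  hK.bddAbove_image (continuous_id.inner continuous_const).continuousOn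

theorem inner_le_supp (hK : IsCompact K) {x : EuclideanSpace ℝ (Fin n)} (hx : x ∈ K)
    (u : EuclideanSpace ℝ (Fin n)) : ⟪x, u⟫ ≤ supp K u :=
  le_csSup (bddAbove_inner_image hK u) (mem_image_of_mem _ hx)

theorem supp_le {u : EuclideanSpace ℝ (Fin n)} (hK : K.Nonempty) {c : ℝ}
    (h : ∀ x ∈ K, ⟪x, u⟫ ≤ c) : supp K u ≤ c :=
  csSup_le (hK.image _) (forall_mem_image.2 h)

theorem supp_smul (K : Set (EuclideanSpace ℝ (Fin n))) {c : ℝ} (hc : 0 ≤ c)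
    (u : EuclideanSpace ℝ (Fin n)) : supp (c • K) u = c * supp K u := by
  rw [supp, image_smul_comm _ _ _ fun x => real_inner_smul_left x u c,
    Real.sSup_smul_of_nonneg hc]
  rfl

theorem supp_add (hK : IsCompact K) (hK' : K.Nonempty) (hL : IsCompact L) (hL' : L.Nonempty)
    (u : EuclideanSpace ℝ (Fin n)) : supp (K + L) u = supp K u + supp L u := by
  have himage : (fun x => ⟪x, u⟫) '' (K + L) = (fun x => ⟪x, u⟫) '' K + (fun x => ⟪x, u⟫) '' L := by
    simp only [← image2_add, image_image2, image2_image_left, image2_image_right, inner_add_left]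
  rw [supp, himage, csSup_add (hK'.image _) (bddAbove_inner_image hK u) (hL'.image _)
    (bddAbove_inner_image hL u)]
  rfl

theorem supp_pos (hK : IsConvexBodyO K) {u : EuclideanSpace ℝ (Fin n)} (hu : ‖u‖ = 1) :
    0 < supp K u := by
  obtain ⟨ε, hε, hball⟩ := Metric.isOpen_iff.mp isOpen_interior 0 hK.2.2
  have hεu : (ε / 2) • u ∈ K := interior_subset <| hball <| by
    rw [Metric.mem_ball, dist_zero_right, norm_smul, hu, mul_one,
      Real.norm_of_nonneg (by positivity)]
    linarith
  have := inner_le_supp hK.1 hεu u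
  rw [real_inner_smul_left, real_inner_self_eq_norm_sq, hu] at this
  linarith

theorem subset_of_supp_le (hK : IsCompact K) (hMc : IsClosed M) (hMconv : Convex ℝ M)
    (hM : M.Nonempty) (h : ∀ u : EuclideanSpace ℝ (Fin n), ‖u‖ = 1 → supp K u ≤ supp M u) :
    K ⊆ M := by
  intro x hx
  by_contra hxM
  obtain ⟨f, c, hfM, hfx⟩ := geometric_hahn_banach_closed_point hMconv hMc hxM
  obtain ⟨v, rfl⟩ := (InnerProductSpace.toDual ℝ (EuclideanSpace ℝ (Fin n))).surjective f
  simp only [InnerProductSpace.toDual_apply_apply] at hfM hfx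
  have hv : v ≠ 0 := by
    rintro rfl
    obtain ⟨m, hm⟩ := hM
    have := hfM m hm
    simp only [inner_zero_left] at this hfx
    linarith
  have hinner : ∀ y, ⟪y, ‖v‖⁻¹ • v⟫ = ‖v‖⁻¹ * ⟪v, y⟫ := fun y => by
    rw [real_inner_smul_right, real_inner_comm]
  have hsuppM : supp M (‖v‖⁻¹ • v) ≤ ‖v‖⁻¹ * c := supp_le hM fun y hy => by
    rw [hinner]
    exact mul_le_mul_of_nonneg_left (hfM y hy).le (by positivity)
  have hsuppK : ‖v‖⁻¹ * c < supp K (‖v‖⁻¹ • v) := by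
    calc ‖v‖⁻¹ * c < ‖v‖⁻¹ * ⟪v, x⟫ := mul_lt_mul_of_pos_left hfx (by positivity)
      _ = ⟪x, ‖v‖⁻¹ • v⟫ := (hinner x).symm
      _ ≤ supp K (‖v‖⁻¹ • v) := inner_le_supp hK hx _
  have hunit : ‖‖v‖⁻¹ • v‖ = 1 := by
    rw [norm_smul, norm_inv, norm_norm, inv_mul_cancel₀ (norm_ne_zero_iff.2 hv)]
  linarith [h _ hunit]

theorem eq_of_supp_eq (hKc : IsCompact K) (hKconv : Convex ℝ K) (hK : K.Nonempty)
    (hLc : IsCompact L) (hLconv : Convex ℝ L) (hL : L.Nonempty)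
    (h : ∀ u : EuclideanSpace ℝ (Fin n), ‖u‖ = 1 → supp K u = supp L u) : K = L :=
  (subset_of_supp_le hKc hLc.isClosed hLconv hL fun u hu => (h u hu).le).antisymm
    (subset_of_supp_le hLc hKc.isClosed hKconv hK fun u hu => (h u hu).ge)

theorem IsConvexBodyO.smul_ssubset (hn : 1 ≤ n) (hK : IsConvexBodyO K) {t : ℝ} (ht₀ : 0 ≤ t)
    (ht₁ : t < 1) : t • K ⊂ K := by
  refine ssubset_iff_subset_ne.2 ⟨?_, fun h => ?_⟩
  · rintro _ ⟨x, hx, rfl⟩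
    exact hK.2.1.smul_mem_of_zero_mem hK.zero_mem hx ⟨ht₀, ht₁.le⟩
  · have hu : ‖EuclideanSpace.single (⟨0, hn⟩ : Fin n) (1 : ℝ)‖ = 1 := by simp
    have hsmul := supp_smul K ht₀ (EuclideanSpace.single ⟨0, hn⟩ 1)
    rw [h] at hsmul
    nlinarith [supp_pos hK hu]

theorem apply_pos_of_strictMono (hn : 1 ≤ n) {F : Set (EuclideanSpace ℝ (Fin n)) → ℝ}
    (hFhom : ∀ c : ℝ, 0 < c → ∀ K, IsConvexBody K → F (c • K) = c * F K)
    (hFstrict : ∀ K L, IsConvexBodyO K → IsConvexBodyO L → K ⊂ L → F K < F L)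
    (hK : IsConvexBodyO K) : 0 < F K := by
  have := hFstrict _ _ (hK.smul one_half_pos) hK
    (hK.smul_ssubset hn one_half_pos.le one_half_lt_one)
  rw [hFhom _ one_half_pos K hK.isConvexBody_s1] at this
  linarith

/-- `M = a ·ₚ K +ₚ b ·ₚ L`, read off the support functions on the unit sphere. -/
def IsLpCombination (p a b : ℝ) (K L M : Set (EuclideanSpace ℝ (Fin n))) : Prop :=
  ∀ u : EuclideanSpace ℝ (Fin n), ‖u‖ = 1 → supp M u ^ p = a * supp K u ^ p + b * supp L u ^ p

namespace IsLpCombination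

variable {p a b α : ℝ} {F : Set (EuclideanSpace ℝ (Fin n)) → ℝ}

theorem inv_smul (h : IsLpCombination p a b K L M) (hK : IsConvexBodyO K) (hL : IsConvexBodyO L)
    (hM : IsConvexBodyO M) {c d e : ℝ} (hc : 0 < c) (hd : 0 < d) (he : 0 < e) :
    IsLpCombination p (a * (c / e) ^ p) (b * (d / e) ^ p) (c⁻¹ • K) (d⁻¹ • L) (e⁻¹ • M) := by
  intro u hu
  have hK' := (supp_pos hK hu).le
  have hL' := (supp_pos hL hu).le
  have hM' := (supp_pos hM hu).le
  rw [supp_smul _ (inv_pos.2 hc).le, supp_smul _ (inv_pos.2 hd).le, supp_smul _ (inv_pos.2 he).le,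
    Real.mul_rpow (inv_pos.2 hc).le hK', Real.mul_rpow (inv_pos.2 hd).le hL',
    Real.mul_rpow (inv_pos.2 he).le hM', h u hu, Real.div_rpow hc.le he.le,
    Real.div_rpow hd.le he.le, Real.inv_rpow hc.le, Real.inv_rpow hd.le, Real.inv_rpow he.le]
  have := Real.rpow_pos_of_pos hc p
  have := Real.rpow_pos_of_pos hd p
  field_simp

theorem eq_of_apply_le (hp : 1 < p) {w : ℝ} (hw : w ∈ Ioo (0 : ℝ) 1)
    (h : IsLpCombination p (1 - w) w K L M) (hK : IsConvexBodyO K) (hL : IsConvexBodyO L)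
    (hM : IsConvexBodyO M)
    (hFconc : ∀ K L, IsConvexBody K → IsConvexBody L → ∀ α : ℝ, α ∈ Ioo (0 : ℝ) 1 →
      (1 - α) * F K + α * F L ≤ F ((1 - α) • K + α • L))
    (hFstrict : ∀ K L, IsConvexBodyO K → IsConvexBodyO L → K ⊂ L → F K < F L)
    (hF : F M ≤ (1 - w) * F K + w * F L) : K = L := by
  have hw₀ : 0 < 1 - w := sub_pos.2 hw.2
  set N := (1 - w) • K + w • L
  have hN : IsConvexBodyO N := (hK.smul hw₀).add (hL.smul hw.1)
  have hsuppN : ∀ u, supp N u = (1 - w) * supp K u + w * supp L u := fun u => by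
    rw [supp_add (hK.1.smul _) hK.nonempty.smul_set (hL.1.smul _) hL.nonempty.smul_set,
      supp_smul _ hw₀.le, supp_smul _ hw.1.le]
  have hNsubM : N ⊆ M := subset_of_supp_le hN.1 hM.1.isClosed hM.2.1 hM.nonempty fun u hu => by
    have hmean := (convexOn_rpow hp.le).2 (supp_pos hK hu).le (supp_pos hL hu).le hw₀.le hw.1.le
      (sub_add_cancel 1 w)
    simp only [smul_eq_mul] at hmean
    rw [← hsuppN, ← h u hu] at hmean
    exact (Real.rpow_le_rpow_iff (supp_pos hN hu).le (supp_pos hM hu).le (by linarith)).1 hmean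
  have hNM : N = M := by
    by_contra hne
    have := hFstrict N M hN hM (ssubset_iff_subset_ne.2 ⟨hNsubM, hne⟩)
    have := hFconc K L hK.isConvexBody_s1 hL.isConvexBody_s1 w hw
    linarith
  refine eq_of_supp_eq hK.1 hK.2.1 hK.nonempty hL.1 hL.2.1 hL.nonempty fun u hu => ?_
  by_contra hne
  have hmean := (strictConvexOn_rpow hp).2 (supp_pos hK hu).le (supp_pos hL hu).le hne hw₀ hw.1
    (sub_add_cancel 1 w)
  simp only [smul_eq_mul] at hmean
  rw [← hsuppN, ← h u hu, hNM] at hmean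
  exact hmean.false

theorem eq_smul_of_smul_self (hp : p ≠ 0) (ha : 0 ≤ a) (hb : 0 ≤ b) {c : ℝ} (hc : 0 < c)
    (h : IsLpCombination p a b (c • L) L M) (hL : IsConvexBodyO L) (hM : IsConvexBodyO M) :
    M = (a * c ^ p + b) ^ p⁻¹ • L := by
  refine eq_of_supp_eq hM.1 hM.2.1 hM.nonempty (hL.1.smul _) (hL.2.1.smul _) hL.nonempty.smul_set
    fun u hu => ?_
  have hL' := (supp_pos hL hu).le
  rw [supp_smul _ (by positivity),
    ← Real.rpow_left_inj (supp_pos hM hu).le (mul_nonneg (by positivity) hL') hp, h u hu,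
    supp_smul _ hc.le, Real.mul_rpow hc.le hL', Real.mul_rpow (by positivity) hL',
    Real.rpow_inv_rpow (by positivity) hp]
  ring

theorem eq_smul_of_apply_rpow_eq (hp : 1 < p) (hα : α ∈ Ioo (0 : ℝ) 1)
    (h : IsLpCombination p (1 - α) α K L M) (hK : IsConvexBodyO K) (hL : IsConvexBodyO L)
    (hM : IsConvexBodyO M)
    (hFhom : ∀ c : ℝ, 0 < c → ∀ K, IsConvexBody K → F (c • K) = c * F K)
    (hFconc : ∀ K L, IsConvexBody K → IsConvexBody L → ∀ α : ℝ, α ∈ Ioo (0 : ℝ) 1 →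
      (1 - α) * F K + α * F L ≤ F ((1 - α) • K + α • L))
    (hFstrict : ∀ K L, IsConvexBodyO K → IsConvexBodyO L → K ⊂ L → F K < F L)
    (hFK : 0 < F K) (hFL : 0 < F L) (hFM : 0 < F M)
    (heq : F M ^ p = (1 - α) * F K ^ p + α * F L ^ p) : K = (F K / F L) • L := by
  set w := α * (F L / F M) ^ p
  have hw : 1 - w = (1 - α) * (F K / F M) ^ p := by
    have := Real.rpow_pos_of_pos hFM p
    simp only [w, Real.div_rpow hFK.le hFM.le, Real.div_rpow hFL.le hFM.le]
    field_simp
    linarith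
  have hw' : w ∈ Ioo (0 : ℝ) 1 :=
    ⟨by have := hα.1; positivity, by rw [← sub_pos, hw]; have := sub_pos.2 hα.2; positivity⟩
  have hnormalised : IsLpCombination p (1 - w) w ((F K)⁻¹ • K) ((F L)⁻¹ • L) ((F M)⁻¹ • M) := by
    rw [hw]
    exact h.inv_smul hK hL hM hFK hFL hFM
  have hKL := hnormalised.eq_of_apply_le hp hw' (hK.smul (inv_pos.2 hFK))
    (hL.smul (inv_pos.2 hFL)) (hM.smul (inv_pos.2 hFM)) hFconc hFstrict (by
      rw [hFhom _ (inv_pos.2 hFK) K hK.isConvexBody_s1, hFhom _ (inv_pos.2 hFL) L hL.isConvexBody_s1,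
        hFhom _ (inv_pos.2 hFM) M hM.isConvexBody_s1, inv_mul_cancel₀ hFK.ne',
        inv_mul_cancel₀ hFL.ne', inv_mul_cancel₀ hFM.ne']
      linarith)
  calc K = F K • (F K)⁻¹ • K := (smul_inv_smul₀ hFK.ne' K).symm
    _ = (F K / F L) • L := by rw [hKL, smul_smul, div_eq_mul_inv]

theorem apply_rpow_eq_of_smul_self (hp : p ≠ 0) (ha : 0 ≤ a) (hb : 0 < b) {c : ℝ} (hc : 0 < c)
    (h : IsLpCombination p a b (c • L) L M) (hL : IsConvexBodyO L) (hM : IsConvexBodyO M)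
    (hFhom : ∀ c : ℝ, 0 < c → ∀ K, IsConvexBody K → F (c • K) = c * F K) (hFL : 0 ≤ F L) :
    F M ^ p = a * F (c • L) ^ p + b * F L ^ p := by
  have hr : 0 < (a * c ^ p + b) ^ p⁻¹ := by positivity
  rw [h.eq_smul_of_smul_self hp ha hb.le hc hL hM, hFhom _ hr L hL.isConvexBody_s1,
    hFhom c hc L hL.isConvexBody_s1, Real.mul_rpow hr.le hFL, Real.mul_rpow hc.le hFL,
    Real.rpow_inv_rpow (by positivity) hp]
  ring

end IsLpCombination

theorem lp_transference_equality_general {n : ℕ} (hn : 1 ≤ n)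
    (F : Set (EuclideanSpace ℝ (Fin n)) → ℝ)
    (hFhom : ∀ c : ℝ, 0 < c → ∀ K, IsConvexBody K → F (c • K) = c * F K)
    (hFconc : ∀ K L, IsConvexBody K → IsConvexBody L → ∀ α : ℝ, α ∈ Set.Ioo (0:ℝ) 1 →
      (1 - α) * F K + α * F L ≤ F ((1 - α) • K + α • L))
    (hFstrict : ∀ K L, IsConvexBodyO K → IsConvexBodyO L → K ⊂ L → F K < F L)
    (p : ℝ) (hp : 1 < p)
    (K L M : Set (EuclideanSpace ℝ (Fin n)))
    (hK : IsConvexBodyO K) (hL : IsConvexBodyO L) (hM : IsConvexBodyO M)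
    (α : ℝ) (hα : α ∈ Set.Ioo (0:ℝ) 1)
    (hMsupp : ∀ u : EuclideanSpace ℝ (Fin n), ‖u‖ = 1 →
      supp M u ^ p = (1 - α) * supp K u ^ p + α * supp L u ^ p) :
    F M ^ p = (1 - α) * F K ^ p + α * F L ^ p ↔ ∃ c : ℝ, 0 < c ∧ K = c • L := by
  have hLp : IsLpCombination p (1 - α) α K L M := hMsupp
  have hFK := apply_pos_of_strictMono hn hFhom hFstrict hK
  have hFL := apply_pos_of_strictMono hn hFhom hFstrict hL
  have hFM := apply_pos_of_strictMono hn hFhom hFstrict hM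
  constructor
  · intro heq
    exact ⟨F K / F L, div_pos hFK hFL,
      hLp.eq_smul_of_apply_rpow_eq hp hα hK hL hM hFhom hFconc hFstrict hFK hFL hFM heq⟩
  · rintro ⟨c, hc, rfl⟩
    exact hLp.apply_rpow_eq_of_smul_self (by linarith) (sub_nonneg.2 hα.2.le) hα.1 hc hL hM hFhom
      hFL.le

/-- Equality part of Theorem 1.1/3.1.
If `F` is nonnegative, positively homogeneous, increasing and concave on convex bodies,
and moreover strictly increasing on convex bodies with the origin in their interiors,
`1 < p < ∞`, `K, L ∈ 𝒦ⁿₒ`, `α ∈ (0,1)`, and `M = (1-α)·_p K +_p α·_p L`, then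
`F(M)^p = (1-α) F(K)^p + α F(L)^p` holds if and only if `K` and `L` are dilates. -/
theorem lp_transference_equality {n : ℕ} (hn : 1 ≤ n)
    (F : Set (EuclideanSpace ℝ (Fin n)) → ℝ)
    (hF0 : ∀ K, IsConvexBody K → 0 ≤ F K)
    (hFhom : ∀ c : ℝ, 0 < c → ∀ K, IsConvexBody K → F (c • K) = c * F K)
    (hFmono : ∀ K L, IsConvexBody K → IsConvexBody L → K ⊆ L → F K ≤ F L)
    (hFconc : ∀ K L, IsConvexBody K → IsConvexBody L → ∀ α : ℝ, α ∈ Set.Ioo (0:ℝ) 1 →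
      (1 - α) * F K + α * F L ≤ F ((1 - α) • K + α • L))
    (hFstrict : ∀ K L, IsConvexBodyO K → IsConvexBodyO L → K ⊂ L → F K < F L)
    (p : ℝ) (hp : 1 < p)
    (K L M : Set (EuclideanSpace ℝ (Fin n)))
    (hK : IsConvexBodyO K) (hL : IsConvexBodyO L) (hM : IsConvexBodyO M)
    (α : ℝ) (hα : α ∈ Set.Ioo (0:ℝ) 1)
    (hMsupp : ∀ u : EuclideanSpace ℝ (Fin n), ‖u‖ = 1 →
      supp M u ^ p = (1 - α) * supp K u ^ p + α * supp L u ^ p) :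
    F M ^ p = (1 - α) * F K ^ p + α * F L ^ p ↔ ∃ c : ℝ, 0 < c ∧ K = c • L :=
  lp_transference_equality_general hn F hFhom hFconc hFstrict p hp K L M hK hL hM α hα hMsupp
end

section
/- (Hyperplane-projection case of Lemma 2.3.) Let n ≥ 2 and let K, L be convex bodies in ℝⁿ with K ⊊ L. Then the set { u ∈ S^{n-1} : H^{n-1}(K|u^⊥) < H^{n-1}(L|u^⊥) } has positive (n-1)-dimensional Hausdorff measure in the unit sphere S^{n-1}, where K|u^⊥ denotes the image of K under the orthogonal projection of ℝⁿ onto the hyperplane u^⊥ through the origin orthogonal to u, and H^{n-1} denotes (n-1)-dimensional Hausdorff measure. -/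
/-!
Pick `x ∈ L \ K`. Separating `x` from `K` by a hyperplane and taking `u₀` parallel to it, the
line `x + ℝ u₀` misses `K`; since `K` is compact, the same holds for all unit `u` in a
neighbourhood of `u₀`, and such an open cap has positive measure because it projects onto an
`(n-1)`-ball of `u₀ᗮ` by a 1-Lipschitz map. For each such `u`, the projection of `x` lies in
the convex set `L|uᗮ` but not in the compact set `K|uᗮ`, so `L|uᗮ \ K|uᗮ` contains a nonempty
relatively open set, of positive `(n-1)`-dimensional measure.
-/

open scoped Pointwise RealInnerProductSpace

open scoped MeasureTheory

/-- The orthogonal projection `K | u^⊥` of a set `K` onto the hyperplane through the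
origin orthogonal to the unit vector `u`. -/
noncomputable def projPerp {n : ℕ} (u : EuclideanSpace ℝ (Fin n))
    (K : Set (EuclideanSpace ℝ (Fin n))) : Set (EuclideanSpace ℝ (Fin n)) :=
  (fun x => x - ⟪x, u⟫ • u) '' K

open scoped ENNReal
open Metric Set Module MeasureTheory

theorem Convex.measure_lt_of_isClosed_subset {F : Type*} [NormedAddCommGroup F]
    [NormedSpace ℝ F] [MeasurableSpace F] [OpensMeasurableSpace F] {μ : Measure F}
    [μ.IsOpenPosMeasure] {C D : Set F} (hC : Convex ℝ C) (hCi : (interior C).Nonempty)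
    (hD : IsClosed D) (hDfin : μ D ≠ ∞) (hDC : D ⊆ C) {p : F} (hpC : p ∈ C) (hpD : p ∉ D) :
    μ D < μ C := by
  have hp : p ∈ closure (interior C) := by
    rw [hC.closure_interior_eq_closure_of_nonempty_interior hCi]
    exact subset_closure hpC
  obtain ⟨q, hqD, hqC⟩ := mem_closure_iff.1 hp Dᶜ hD.isOpen_compl hpD
  have hpos : 0 < μ (interior C \ D) :=
    (isOpen_interior.sdiff hD).measure_pos μ ⟨q, hqC, hqD⟩
  calc μ D < μ D + μ (interior C \ D) := ENNReal.lt_add_right hDfin hpos.ne'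
    _ = μ (D ∪ (interior C \ D)) :=
      (measure_union disjoint_sdiff_right (isOpen_interior.sdiff hD).measurableSet).symm
    _ ≤ μ C := measure_mono (union_subset hDC (sdiff_subset.trans interior_subset))

section InnerProductSpace

variable {E : Type*} [NormedAddCommGroup E] [InnerProductSpace ℝ E]

theorem natCast_finrank_orthogonal_span_singleton [FiniteDimensional ℝ E] {u : E}
    (hu : u ≠ 0) : (finrank ℝ (ℝ ∙ u)ᗮ : ℝ) = finrank ℝ E - 1 := by
  have := (ℝ ∙ u).finrank_add_finrank_orthogonal
  rw [finrank_span_singleton hu] at this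
  rw [← this]; push_cast; ring

theorem coe_orthogonalProjectionOnto_orthogonal_unit_singleton {u : E} (hu : ‖u‖ = 1) (x : E) :
    ((ℝ ∙ u)ᗮ.orthogonalProjectionOnto x : E) = x - ⟪x, u⟫ • u := by
  rw [← Submodule.starProjection_apply, Submodule.starProjection_orthogonal_val,
    Submodule.starProjection_unit_singleton ℝ hu, real_inner_comm]

/-- Over a small ball of `uᗮ`, the graph of `w ↦ w + √(1 - ‖w‖²) • u` lies in the cap. -/
theorem exists_ball_subset_orthogonalProjectionOnto_sphere_inter_ball {u : E} (hu : ‖u‖ = 1)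
    {δ : ℝ} (hδ : 0 < δ) : ∃ r > 0,
      ball (0 : (ℝ ∙ u)ᗮ) r ⊆ (ℝ ∙ u)ᗮ.orthogonalProjectionOnto '' (sphere 0 1 ∩ ball u δ) := by
  set W := (ℝ ∙ u)ᗮ
  set graph : W → E := fun w => w + √(1 - ‖w‖ ^ 2) • u
  have hgraph_norm : ∀ w : W, ‖w‖ ≤ 1 → ‖graph w‖ = 1 := by
    intro w hw
    have horth : ⟪(w : E), √(1 - ‖w‖ ^ 2) • u⟫ = 0 := by
      rw [real_inner_smul_right, real_inner_comm,
        Submodule.mem_orthogonal_singleton_iff_inner_right.1 w.2, mul_zero]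
    rw [← pow_eq_one_iff_of_nonneg (norm_nonneg _) two_ne_zero, norm_add_sq_real, horth,
      norm_smul, hu, mul_one, Real.norm_eq_abs, sq_abs, Real.sq_sqrt (by nlinarith [norm_nonneg w])]
    simp
  have hgraph_proj : ∀ w : W, W.orthogonalProjectionOnto (graph w) = w := by
    intro w
    rw [map_add, map_smul, W.orthogonalProjectionOnto_mem_subspace_eq_self,
      Submodule.orthogonalProjectionOnto_orthogonalComplement_singleton_eq_zero, smul_zero,
      add_zero]
  have hgraph_zero : graph 0 = u := by simp [graph]
  have hgraph_cont : Continuous graph := by fun_prop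
  obtain ⟨r, hr, hrδ⟩ := Metric.continuousAt_iff.1 hgraph_cont.continuousAt δ hδ
  refine ⟨min r 1, lt_min hr one_pos, fun w hw => ⟨graph w, ⟨?_, ?_⟩, hgraph_proj w⟩⟩
  all_goals rw [mem_ball_zero_iff] at hw
  · rw [mem_sphere_zero_iff_norm]
    exact hgraph_norm w (hw.le.trans (min_le_right _ _))
  · rw [mem_ball, ← hgraph_zero]
    exact hrδ (by simpa using hw.trans_le (min_le_left _ _))

theorem hausdorffMeasure_sphere_inter_ball_pos [FiniteDimensional ℝ E] [MeasurableSpace E]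
    [BorelSpace E] {u : E} (hu : ‖u‖ = 1) {δ : ℝ} (hδ : 0 < δ) :
    0 < μH[(finrank ℝ E : ℝ) - 1] (sphere (0 : E) 1 ∩ ball u δ) := by
  set W := (ℝ ∙ u)ᗮ
  have hW := natCast_finrank_orthogonal_span_singleton (u := u) (by rintro rfl; simp at hu)
  obtain ⟨r, hr, hball⟩ := exists_ball_subset_orthogonalProjectionOnto_sphere_inter_ball hu hδ
  calc (0 : ℝ≥0∞) < μH[finrank ℝ W] (ball (0 : W) r) :=
        isOpen_ball.measure_pos _ (nonempty_ball.2 hr)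
    _ ≤ μH[finrank ℝ W] (W.orthogonalProjectionOnto '' (sphere 0 1 ∩ ball u δ)) :=
        measure_mono hball
    _ ≤ _ := by
        rw [hW]
        simpa using W.lipschitzWith_orthogonalProjectionOnto.hausdorffMeasure_image_le
          (by rw [← hW]; positivity) _

end InnerProductSpace

section projPerp

variable {n : ℕ}

local notation "E" => EuclideanSpace ℝ (Fin n)

theorem hausdorffMeasure_projPerp {u : E} (hu : ‖u‖ = 1) (K : Set E) :
    μH[(n : ℝ) - 1] (projPerp u K) =
      μH[finrank ℝ (ℝ ∙ u)ᗮ] ((ℝ ∙ u)ᗮ.orthogonalProjectionOnto '' K) := by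
  have hW : (finrank ℝ (ℝ ∙ u)ᗮ : ℝ) = n - 1 := by
    rw [natCast_finrank_orthogonal_span_singleton (u := u) (by rintro rfl; simp at hu),
      finrank_euclideanSpace_fin]
  have himage : projPerp u K = (↑) '' ((ℝ ∙ u)ᗮ.orthogonalProjectionOnto '' K) := by
    rw [image_image, projPerp]
    simp only [coe_orthogonalProjectionOnto_orthogonal_unit_singleton hu]
  rw [himage, isometry_subtype_coe.hausdorffMeasure_image (Or.inl (by rw [← hW]; positivity)),
    hW]

theorem hausdorffMeasure_projPerp_lt {K L : Set E} (hK : IsCompact K) (hL : Convex ℝ L)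
    (hLi : (interior L).Nonempty) (hKL : K ⊆ L) {u : E} (hu : ‖u‖ = 1) {x : E} (hx : x ∈ L)
    (hxK : x - ⟪x, u⟫ • u ∉ projPerp u K) :
    μH[(n : ℝ) - 1] (projPerp u K) < μH[(n : ℝ) - 1] (projPerp u L) := by
  set P := (ℝ ∙ u)ᗮ.orthogonalProjectionOnto
  have hPK : IsCompact (P '' K) := hK.image P.continuous
  have hPsurj : Function.Surjective P := fun w =>
    ⟨w, Submodule.orthogonalProjectionOnto_mem_subspace_eq_self w⟩
  have hPLi : (interior (P '' L)).Nonempty :=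
    (hLi.image P).mono <|
      interior_maximal (image_mono interior_subset) (P.isOpenMap hPsurj _ isOpen_interior)
  have hPxK : P x ∉ P '' K := by
    rintro ⟨y, hy, hyx⟩
    refine hxK ⟨y, hy, ?_⟩
    simpa [P, coe_orthogonalProjectionOnto_orthogonal_unit_singleton hu] using
      congrArg Subtype.val hyx
  rw [hausdorffMeasure_projPerp hu, hausdorffMeasure_projPerp hu]
  exact (hL.linear_image P.toLinearMap).measure_lt_of_isClosed_subset hPLi hPK.isClosed
    hPK.measure_lt_top.ne (image_mono hKL) (mem_image_of_mem P hx) hPxK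

theorem exists_mem_sphere_notMem_projPerp (hn : 2 ≤ n) {K : Set E} (hKc : Convex ℝ K)
    (hKcl : IsClosed K) {x : E} (hx : x ∉ K) :
    ∃ u ∈ sphere (0 : E) 1, x - ⟪x, u⟫ • u ∉ projPerp u K := by
  obtain ⟨f, c, hfK, hfx⟩ := geometric_hahn_banach_closed_point hKc hKcl hx
  obtain ⟨w, hw, hw0⟩ := Submodule.exists_mem_ne_zero_of_ne_bot <|
    LinearMap.ker_ne_bot_of_finrank_lt (f := f.toLinearMap)
      (by rw [finrank_self, finrank_euclideanSpace_fin]; omega)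
  refine ⟨‖w‖⁻¹ • w, by rw [mem_sphere_zero_iff_norm]; exact norm_smul_inv_norm hw0, ?_⟩
  rintro ⟨y, hy, hyx⟩
  have hfw : f w = 0 := hw
  have : f y = f x := by simpa [hfw] using congrArg f hyx
  linarith [hfK y hy]

theorem isClosed_setOf_mem_projPerp {K : Set E} (hK : IsCompact K) (x : E) :
    IsClosed {u ∈ sphere (0 : E) 1 | x - ⟪x, u⟫ • u ∈ projPerp u K} := by
  have hpairs : IsCompact ((sphere (0 : E) 1 ×ˢ K) ∩
      {p | p.2 - ⟪p.2, p.1⟫ • p.1 = x - ⟪x, p.1⟫ • p.1}) :=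
    (isCompact_sphere 0 1 |>.prod hK).inter_right (isClosed_eq (by fun_prop) (by fun_prop))
  convert (hpairs.image continuous_fst).isClosed using 1
  ext u
  simp [projPerp, and_assoc]

end projPerp

/-- Hyperplane-projection case of Lemma 2.3. For `n ≥ 2` and convex
bodies `K ⊊ L` in `ℝⁿ`, the set of unit vectors `u` with
`H^{n-1}(K|u^⊥) < H^{n-1}(L|u^⊥)` has positive `(n-1)`-dimensional Hausdorff measure
in the unit sphere. -/
theorem proj_strict_on_positive_measure_set {n : ℕ} (hn : 2 ≤ n)
    (K L : Set (EuclideanSpace ℝ (Fin n)))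
    (hK : IsConvexBody K) (hL : IsConvexBody L) (hKL : K ⊂ L) :
    0 < μH[(n : ℝ) - 1] {u : EuclideanSpace ℝ (Fin n) |
      u ∈ Metric.sphere (0 : EuclideanSpace ℝ (Fin n)) 1 ∧
        μH[(n : ℝ) - 1] (projPerp u K) < μH[(n : ℝ) - 1] (projPerp u L)} := by
  obtain ⟨x, hxL, hxK⟩ := exists_of_ssubset hKL
  obtain ⟨u₀, hu₀, hu₀K⟩ := exists_mem_sphere_notMem_projPerp hn hK.2.1 hK.1.isClosed hxK
  obtain ⟨δ, hδ, hball⟩ :=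
    isOpen_iff.1 (isClosed_setOf_mem_projPerp hK.1 x).isOpen_compl u₀ fun h => hu₀K h.2
  have hcap : sphere 0 1 ∩ ball u₀ δ ⊆ {u | u ∈ sphere 0 1 ∧
      μH[(n : ℝ) - 1] (projPerp u K) < μH[(n : ℝ) - 1] (projPerp u L)} := by
    rintro u ⟨hu, huδ⟩
    refine ⟨hu, hausdorffMeasure_projPerp_lt hK.1 hL.2.1 hL.2.2 hKL.subset
      (mem_sphere_zero_iff_norm.1 hu) hxL fun hxu => hball huδ ⟨hu, hxu⟩⟩
  have hcap_pos := hausdorffMeasure_sphere_inter_ball_pos (mem_sphere_zero_iff_norm.1 hu₀) hδ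
  rw [finrank_euclideanSpace_fin] at hcap_pos
  exact hcap_pos.trans_le (measure_mono hcap)
end
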